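/- The expected runtime of Montanaro's quantum key-guessing algorithm, proportional to ∑_{i=1}^{N} √i · p_i, satisfies 2^{H_{2/3}(D)/2} / √(1 + log₂ N) ≤ ∑_{i=1}^{N} √i · p_i ≤ 2^{H_{2/3}(D)/2}. -/

import Mathlib

/-!
Write `S = ∑ p_i^{2/3}`, so that `2^{H_{2/3}/2} = S^{3/2}`. Upper bound: since the `p_i` decrease,
`(i+1) p_i^{2/3} ≤ S`, hence `√(i+1) p_i = √((i+1) p_i^{2/3}) · p_i^{2/3} ≤ √S · p_i^{2/3}`;
summing gives `S^{3/2}`. Lower bound: Hölder with exponents `3/2` and `3` applied to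
`p_i^{2/3} = (√(i+1) p_i)^{2/3} · (i+1)^{-1/3}` gives `S ≤ T^{2/3} H_N^{1/3}`, where `T` is the
guessing time and `H_N ≤ 1 + ln N ≤ 1 + log₂ N` is the harmonic number.
-/

open Finset Real

theorem Antitone.succ_mul_le_sum {n : ℕ} {f : Fin n → ℝ} (hf : Antitone f) (hf0 : ∀ i, 0 ≤ f i)
    (i : Fin n) : ((i : ℝ) + 1) * f i ≤ ∑ j, f j :=
  calc ((i : ℝ) + 1) * f i = ∑ _j ∈ Iic i, f i := by simp [Fin.card_Iic]
    _ ≤ ∑ j ∈ Iic i, f j := sum_le_sum fun j hj => hf (mem_Iic.1 hj)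
    _ ≤ ∑ j, f j := sum_le_univ_sum_of_nonneg hf0

theorem sqrt_mul_rpow_two_thirds {c x : ℝ} (hc : 0 ≤ c) (hx : 0 ≤ x) :
    √(c * x ^ (2 / 3 : ℝ)) * x ^ (2 / 3 : ℝ) = √c * x := by
  rw [sqrt_mul hc, sqrt_eq_rpow, sqrt_eq_rpow, ← rpow_mul hx, mul_assoc,
    ← rpow_add' hx (by norm_num)]
  norm_num

theorem sum_sqrt_succ_mul_le_of_antitone {n : ℕ} {p : Fin n → ℝ} (hp : Antitone p)
    (hp0 : ∀ i, 0 ≤ p i) :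
    ∑ i : Fin n, √((i : ℝ) + 1) * p i ≤ (∑ i, p i ^ (2 / 3 : ℝ)) ^ (3 / 2 : ℝ) := by
  set S := ∑ i, p i ^ (2 / 3 : ℝ)
  have hS : 0 ≤ S := sum_nonneg fun i _ => rpow_nonneg (hp0 i) _
  have hanti : Antitone fun i => p i ^ (2 / 3 : ℝ) := fun i j hij =>
    rpow_le_rpow (hp0 j) (hp hij) (by norm_num)
  have hmass := hanti.succ_mul_le_sum fun i => rpow_nonneg (hp0 i) _
  calc ∑ i : Fin n, √((i : ℝ) + 1) * p i
      = ∑ i : Fin n, √(((i : ℝ) + 1) * p i ^ (2 / 3 : ℝ)) * p i ^ (2 / 3 : ℝ) :=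
        sum_congr rfl fun i _ => (sqrt_mul_rpow_two_thirds (by positivity) (hp0 i)).symm
    _ ≤ ∑ i, √S * p i ^ (2 / 3 : ℝ) :=
        sum_le_sum fun i _ =>
          mul_le_mul_of_nonneg_right (sqrt_le_sqrt (hmass i)) (rpow_nonneg (hp0 i) _)
    _ = S ^ (3 / 2 : ℝ) := by
        rw [← mul_sum, sqrt_eq_rpow, ← rpow_add_one' hS (by norm_num)]
        norm_num

theorem sum_inv_succ_le_one_add_logb_two (n : ℕ) :
    ∑ i : Fin n, ((i : ℝ) + 1)⁻¹ ≤ 1 + logb 2 n := by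
  have hharm : ∑ i : Fin n, ((i : ℝ) + 1)⁻¹ = harmonic n := by
    rw [Fin.sum_univ_eq_sum_range (fun i : ℕ => ((i : ℝ) + 1)⁻¹), harmonic]
    push_cast
    rfl
  have hlog : log n ≤ logb 2 n :=
    le_div_self (log_natCast_nonneg n) (log_pos one_lt_two) (by linarith [log_two_lt_d9])
  linarith [harmonic_le_one_add_log n]

theorem sum_rpow_two_thirds_le {ι : Type*} (s : Finset ι) {w a : ι → ℝ} (hw : ∀ i ∈ s, 0 < w i)
    (ha : ∀ i ∈ s, 0 ≤ a i) :
    ∑ i ∈ s, a i ^ (2 / 3 : ℝ) ≤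
      (∑ i ∈ s, √(w i) * a i) ^ (2 / 3 : ℝ) * (∑ i ∈ s, (w i)⁻¹) ^ (1 / 3 : ℝ) := by
  have hpq : (3 / 2 : ℝ).HolderConjugate 3 := ⟨by norm_num, by norm_num, by norm_num⟩
  have hsa : ∀ i ∈ s, 0 ≤ √(w i) * a i := fun i hi => mul_nonneg (sqrt_nonneg _) (ha i hi)
  have hholder := inner_le_Lp_mul_Lq_of_nonneg s hpq (f := fun i => (√(w i) * a i) ^ (2 / 3 : ℝ))
    (g := fun i => (w i)⁻¹ ^ (1 / 3 : ℝ)) (fun i hi => rpow_nonneg (hsa i hi) _)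
    (fun i hi => rpow_nonneg (inv_nonneg.2 (hw i hi).le) _)
  have hprod : ∀ i ∈ s,
      (√(w i) * a i) ^ (2 / 3 : ℝ) * (w i)⁻¹ ^ (1 / 3 : ℝ) = a i ^ (2 / 3 : ℝ) := by
    intro i hi
    have hwi := hw i hi
    rw [mul_rpow (sqrt_nonneg _) (ha i hi), sqrt_eq_rpow, ← rpow_mul hwi.le, inv_rpow hwi.le]
    norm_num
    field_simp
  have hleft : ∀ i ∈ s, ((√(w i) * a i) ^ (2 / 3 : ℝ)) ^ (3 / 2 : ℝ) = √(w i) * a i :=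
    fun i hi => by
      rw [← rpow_mul (hsa i hi)]
      norm_num
  have hright : ∀ i ∈ s, ((w i)⁻¹ ^ (1 / 3 : ℝ)) ^ (3 : ℝ) = (w i)⁻¹ := fun i hi => by
    rw [← rpow_mul (inv_nonneg.2 (hw i hi).le)]
    norm_num
  rw [sum_congr rfl hprod, sum_congr rfl hleft, sum_congr rfl hright] at hholder
  norm_num at hholder ⊢
  exact hholder

theorem sum_rpow_two_thirds_rpow_div_le {n : ℕ} {p : Fin n → ℝ} (hp0 : ∀ i, 0 ≤ p i) :
    (∑ i, p i ^ (2 / 3 : ℝ)) ^ (3 / 2 : ℝ) / √(1 + logb 2 n) ≤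
      ∑ i : Fin n, √((i : ℝ) + 1) * p i := by
  set T := ∑ i : Fin n, √((i : ℝ) + 1) * p i
  have hT : 0 ≤ T := sum_nonneg fun i _ => mul_nonneg (sqrt_nonneg _) (hp0 i)
  have hL : 0 < 1 + logb 2 n := by
    have : 0 ≤ logb 2 n := div_nonneg (log_natCast_nonneg n) (log_nonneg one_le_two)
    linarith
  have hHolder : ∑ i, p i ^ (2 / 3 : ℝ) ≤ T ^ (2 / 3 : ℝ) * (1 + logb 2 n) ^ (1 / 3 : ℝ) :=
    (sum_rpow_two_thirds_le univ (w := fun i : Fin n => (i : ℝ) + 1) (fun i _ => by positivity)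
      fun i _ => hp0 i).trans <| by
        gcongr
        exact sum_inv_succ_le_one_add_logb_two n
  rw [div_le_iff₀ (sqrt_pos.2 hL)]
  calc (∑ i, p i ^ (2 / 3 : ℝ)) ^ (3 / 2 : ℝ)
      ≤ (T ^ (2 / 3 : ℝ) * (1 + logb 2 n) ^ (1 / 3 : ℝ)) ^ (3 / 2 : ℝ) := by
        gcongr
        exact sum_nonneg fun i _ => rpow_nonneg (hp0 i) _
    _ = T * √(1 + logb 2 n) := by
        rw [mul_rpow (by positivity) (by positivity), ← rpow_mul hT, ← rpow_mul hL.le, sqrt_eq_rpow]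
        norm_num

theorem quantum_key_guessing_general {K : Type*} [Fintype K] [Nonempty K]
    (P : K → ℝ) (hpos : ∀ x, 0 < P x)
    (e : Fin (Fintype.card K) ≃ K)
    (hsort : ∀ i j : Fin (Fintype.card K), i ≤ j → P (e j) ≤ P (e i)) :
    (2 : ℝ) ^ ((3 * Real.logb 2 (∑ x, P x ^ ((2 : ℝ) / 3))) / 2) /
        Real.sqrt (1 + Real.logb 2 (Fintype.card K)) ≤
      ∑ i : Fin (Fintype.card K), Real.sqrt ((i : ℝ) + 1) * P (e i) ∧
    ∑ i : Fin (Fintype.card K), Real.sqrt ((i : ℝ) + 1) * P (e i) ≤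
      (2 : ℝ) ^ ((3 * Real.logb 2 (∑ x, P x ^ ((2 : ℝ) / 3))) / 2) := by
  have hS : ∑ x, P x ^ (2 / 3 : ℝ) = ∑ i, P (e i) ^ (2 / 3 : ℝ) := (e.sum_comp _).symm
  have hSpos : 0 < ∑ x, P x ^ (2 / 3 : ℝ) :=
    sum_pos (fun x _ => rpow_pos_of_pos (hpos x) _) univ_nonempty
  have hrenyi : (2 : ℝ) ^ ((3 * logb 2 (∑ x, P x ^ (2 / 3 : ℝ))) / 2) =
      (∑ i, P (e i) ^ (2 / 3 : ℝ)) ^ (3 / 2 : ℝ) := by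
    rw [mul_div_right_comm, mul_comm, rpow_mul zero_le_two,
      rpow_logb two_pos one_lt_two.ne' hSpos, hS]
  have hp0 : ∀ i, 0 ≤ P (e i) := fun i => (hpos _).le
  rw [hrenyi]
  exact ⟨sum_rpow_two_thirds_rpow_div_le hp0, sum_sqrt_succ_mul_le_of_antitone hsort hp0⟩

/-- **Quantum key guessing (tight analysis of Montanaro's algorithm).** For a
distribution on a finite nonempty set `K` with pmf `P` and keys enumerated in
decreasing order of probability by `e`, the expected quantum guessing time
`∑ i, √i · p_i` satisfies
`2^(H_{2/3}(D)/2) / √(1 + log₂ |K|) ≤ ∑ i, √i · p_i ≤ 2^(H_{2/3}(D)/2)`,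
where `H_{2/3}(D) = 3·log₂(∑_x P(x)^{2/3})`. -/
theorem quantum_key_guessing {K : Type*} [Fintype K] [Nonempty K]
    (P : K → ℝ) (hpos : ∀ x, 0 < P x) (hle : ∀ x, P x ≤ 1)
    (hsum : ∑ x, P x = 1)
    (e : Fin (Fintype.card K) ≃ K)
    (hsort : ∀ i j : Fin (Fintype.card K), i ≤ j → P (e j) ≤ P (e i)) :
    (2 : ℝ) ^ ((3 * Real.logb 2 (∑ x, P x ^ ((2 : ℝ) / 3))) / 2) /
        Real.sqrt (1 + Real.logb 2 (Fintype.card K)) ≤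
      ∑ i : Fin (Fintype.card K), Real.sqrt ((i : ℝ) + 1) * P (e i) ∧
    ∑ i : Fin (Fintype.card K), Real.sqrt ((i : ℝ) + 1) * P (e i) ≤
      (2 : ℝ) ^ ((3 * Real.logb 2 (∑ x, P x ^ ((2 : ℝ) / 3))) / 2) :=
  quantum_key_guessing_general P hpos e hsort
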